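/- arXiv:1605.06530 — 3 statements merged into one kernel-verified Lean document; each statement's English description precedes it below -/
import Mathlib

section
/- For each n ≥ 3 let G_n be the wheel graph with n leaves: a hub H joined by weight-1 edges to each of n leaves arranged in a cycle, each leaf also joined by weight-1 edges to its two cyclically adjacent leaves, all other weights zero. Let (b/c)*(n) denote the critical benefit-to-cost ratio of G_n. Then (b/c)*(n) converges as n → ∞ and lim_{n→∞} (b/c)*(n) = (429 + 90√5)/82. -/
open Finset Filter Asymptotics

noncomputable section

namespace EvoGraph

variable {V : Type*} [Fintype V] [DecidableEq V]

/-- Weighted degree `w_i = ∑_j w_{ij}`. -/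
def deg (w : V → V → ℝ) (i : V) : ℝ := ∑ j, w i j

/-- Total edge weight `W = ∑_i w_i`. -/
def Wtot (w : V → V → ℝ) : ℝ := ∑ i, deg w i

/-- Random-walk step probability `p_{ij} = w_{ij}/w_i`. -/
def step (w : V → V → ℝ) (i j : V) : ℝ := w i j / deg w i

/-- The stochastic matrix `(p_{ij})`. -/
def stepMat (w : V → V → ℝ) : Matrix V V ℝ := Matrix.of fun i j => step w i j

/-- `n`-step probability `p^{(n)}_{ij}`: the `(i,j)` entry of the `n`-th power of `(p_{ij})`. -/
def stepN (w : V → V → ℝ) (n : ℕ) (i j : V) : ℝ := (stepMat w ^ n) i j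

/-- Stationary distribution `π_i = w_i / W`. -/
def statDist (w : V → V → ℝ) (i : V) : ℝ := deg w i / Wtot w

/-- `w` is a finite connected weighted graph: symmetric nonnegative weights
(self-loops allowed), positive weighted degrees, and any two vertices joined by
a path of edges of positive weight. -/
def IsWeightedGraph (w : V → V → ℝ) : Prop :=
  (∀ i j, w i j = w j i) ∧ (∀ i j, 0 ≤ w i j) ∧ (∀ i, 0 < deg w i) ∧
  ∀ i j : V, Relation.ReflTransGen (fun a b => 0 < w a b) i j

/-- `τ` is the (symmetric) solution of the coalescence-time system:
`τ_{ii} = 0`, and `τ_{ij} = 1 + (1/2) ∑_k (p_{ik} τ_{kj} + p_{jk} τ_{ik})` for `i ≠ j`. -/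
def IsCoalescent (w : V → V → ℝ) (τ : V → V → ℝ) : Prop :=
  (∀ i j, τ i j = τ j i) ∧ (∀ i, τ i i = 0) ∧
  ∀ i j, i ≠ j →
    τ i j = 1 + (1 / 2) * ∑ k, (step w i k * τ k j + step w j k * τ i k)

/-- `τ^{(n)} = ∑_{i,j} π_i p^{(n)}_{ij} τ_{ij}`. -/
def tauWalk (w τ : V → V → ℝ) (n : ℕ) : ℝ :=
  ∑ i, ∑ j, statDist w i * stepN w n i j * τ i j

/-- Remeeting time `τ⁺_i = 1 + ∑_j p_{ij} τ_{ij}`. -/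
def remeet (w τ : V → V → ℝ) (i : V) : ℝ := 1 + ∑ j, step w i j * τ i j

/-- The wheel graph with `n` leaves: hub `none`; leaves `some a` with
`a : Fin n` arranged in a cycle. Each leaf is joined to the hub and to its two
cyclically adjacent leaves by weight-1 edges; all other weights are zero. -/
def wheelW (n : ℕ) [NeZero n] : Option (Fin n) → Option (Fin n) → ℝ
  | none, some _ => 1
  | some _, none => 1
  | some a, some b => if b = a + 1 ∨ a = b + 1 then 1 else 0
  | none, none => 0


/-!
Multiplying the coalescence equations by `π_i p^{(m)}_{ij}` and summing over `i, j`, reversibility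
`π_i p_{ik} = π_k p_{ki}` turns both halves of the right-hand side into `τ^{(m+1)}`, while the
diagonal, where the equation fails, contributes the remeeting times:
`τ^{(m+1)} = τ^{(m)} - 1 + ∑_i π_i p^{(m)}_{ii} τ⁺_i`. Without self-loops this gives
`τ^{(2)} = ∑ π_i τ⁺_i - 2` and `τ^{(3)} - τ^{(1)} = ∑ π_i p^{(2)}_{ii} τ⁺_i - 2`.

On the wheel, rotation invariance suggests a coalescence time `A` between hub and leaf and `F(d)`
between leaves at cyclic distance `d`. The leaf equations `F(d) = 1 + (A + F(d-1) + F(d+1))/3`,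
`F(0) = F(n) = 0`, are solved by `F(d) = (3 + A)(1 - (r^d + r^{n-d})/(1 + r^n))` with
`r = (3 + √5)/2`, and the hub equation then fixes `A`. As `n → ∞`, `A → 15` and
`F(1) → 18(1 - 1/r) = 9(√5 - 1)`, so the remeeting times tend to `16` at the hub and `6√5` at a
leaf, and the ratio tends to `(2 + 9√5/2)/(√5 - 2/3) = (429 + 90√5)/82`.
-/

section RandomWalk

theorem sum_step_eq_one {V : Type*} [Fintype V] {w : V → V → ℝ} {i : V} (hi : deg w i ≠ 0) :
    ∑ j, step w i j = 1 := by
  simp only [step, ← Finset.sum_div]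
  exact div_self hi

theorem sum_statDist_eq_one {V : Type*} [Fintype V] {w : V → V → ℝ} (hW : Wtot w ≠ 0) :
    ∑ i, statDist w i = 1 := by
  simp only [statDist, ← Finset.sum_div]
  exact div_self hW

theorem statDist_mul_step_comm {V : Type*} [Fintype V] {w : V → V → ℝ}
    (hsymm : ∀ i j, w i j = w j i) (hdeg : ∀ i, deg w i ≠ 0) (i j : V) :
    statDist w i * step w i j = statDist w j * step w j i := by
  simp only [statDist, step]
  rw [hsymm i j]
  field_simp [hdeg i, hdeg j]

variable {w : V → V → ℝ}

theorem stepN_zero (i j : V) : stepN w 0 i j = if i = j then 1 else 0 := by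
  simp [stepN, Matrix.one_apply]

theorem stepN_one (i j : V) : stepN w 1 i j = step w i j := by
  simp [stepN, stepMat]

theorem stepN_succ (m : ℕ) (i j : V) :
    stepN w (m + 1) i j = ∑ k, step w i k * stepN w m k j := by
  simp [stepN, pow_succ', Matrix.mul_apply, stepMat]

theorem stepN_succ' (m : ℕ) (i j : V) :
    stepN w (m + 1) i j = ∑ k, stepN w m i k * step w k j := by
  simp [stepN, pow_succ, Matrix.mul_apply, stepMat]

theorem sum_stepN_eq_one (hdeg : ∀ i, deg w i ≠ 0) (m : ℕ) (i : V) :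
    ∑ j, stepN w m i j = 1 := by
  induction m generalizing i with
  | zero => simp [stepN_zero]
  | succ m ih =>
    simp_rw [stepN_succ]
    rw [Finset.sum_comm]
    simp_rw [← Finset.mul_sum, ih, mul_one]
    exact sum_step_eq_one (hdeg i)

theorem tauWalk_succ_eq_sum_step_right (X : V → V → ℝ) (m : ℕ) :
    tauWalk w X (m + 1) = ∑ i, ∑ j, statDist w i * stepN w m i j * ∑ k, step w j k * X i k := by
  simp only [tauWalk, stepN_succ', Finset.mul_sum, Finset.sum_mul]
  refine Finset.sum_congr rfl fun i _ => ?_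
  rw [Finset.sum_comm]
  simp only [mul_assoc]

theorem tauWalk_succ_eq_sum_step_left (hsymm : ∀ i j, w i j = w j i) (hdeg : ∀ i, deg w i ≠ 0)
    (X : V → V → ℝ) (m : ℕ) :
    tauWalk w X (m + 1) = ∑ i, ∑ j, statDist w i * stepN w m i j * ∑ k, step w i k * X k j := by
  simp only [tauWalk, stepN_succ, Finset.mul_sum, Finset.sum_mul]
  calc ∑ k, ∑ j, ∑ l, statDist w k * (step w k l * stepN w m l j) * X k j
      = ∑ k, ∑ j, ∑ l, statDist w l * stepN w m l j * (step w l k * X k j) := by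
        refine Finset.sum_congr rfl fun k _ => Finset.sum_congr rfl fun j _ =>
          Finset.sum_congr rfl fun l _ => ?_
        rw [← mul_assoc, statDist_mul_step_comm hsymm hdeg k l]
        ring
    _ = _ := by
        refine Finset.sum_comm.trans ?_
        refine (Finset.sum_congr rfl fun j _ => Finset.sum_comm).trans ?_
        exact Finset.sum_comm

variable {τ : V → V → ℝ}

theorem IsCoalescent.eq_sub_remeet (hτ : IsCoalescent w τ) (i j : V) :
    τ i j = 1 + 1 / 2 * (∑ k, step w i k * τ k j + ∑ k, step w j k * τ i k)
      - if i = j then remeet w τ i else 0 := by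
  obtain ⟨hsymm, hdiag, heq⟩ := hτ
  by_cases hij : i = j
  · subst hij
    simp only [if_true, remeet, hdiag, hsymm _ i]
    ring
  · rw [heq i j hij, if_neg hij, Finset.sum_add_distrib]
    ring

theorem IsCoalescent.tauWalk_zero (hτ : IsCoalescent w τ) : tauWalk w τ 0 = 0 := by
  simp [tauWalk, stepN_zero, hτ.2.1]

theorem IsCoalescent.tauWalk_succ [Nonempty V] (hsymm : ∀ i j, w i j = w j i)
    (hdeg : ∀ i, 0 < deg w i) (hτ : IsCoalescent w τ) (m : ℕ) :
    tauWalk w τ (m + 1) = tauWalk w τ m - 1 + ∑ i, statDist w i * stepN w m i i * remeet w τ i := by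
  have hdeg' : ∀ i, deg w i ≠ 0 := fun i => (hdeg i).ne'
  have hW : Wtot w ≠ 0 := (Finset.sum_pos (fun i _ => hdeg i) Finset.univ_nonempty).ne'
  have hmass : ∑ i, ∑ j, statDist w i * stepN w m i j = 1 := by
    simp_rw [← Finset.mul_sum, sum_stepN_eq_one hdeg', mul_one]
    exact sum_statDist_eq_one hW
  have hsplit : tauWalk w τ m = ∑ i, ∑ j, statDist w i * stepN w m i j
      + 1 / 2 * (tauWalk w τ (m + 1) + tauWalk w τ (m + 1))
      - ∑ i, statDist w i * stepN w m i i * remeet w τ i := by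
    nth_rewrite 1 [tauWalk_succ_eq_sum_step_left hsymm hdeg']
    rw [tauWalk_succ_eq_sum_step_right]
    calc tauWalk w τ m = ∑ i, ∑ j, statDist w i * stepN w m i j *
          (1 + 1 / 2 * (∑ k, step w i k * τ k j + ∑ k, step w j k * τ i k)
            - if i = j then remeet w τ i else 0) :=
          Finset.sum_congr rfl fun i _ => Finset.sum_congr rfl fun j _ => by rw [← hτ.eq_sub_remeet]
      _ = _ := by
        simp only [mul_add, mul_sub, mul_one, mul_ite, mul_zero, Finset.sum_add_distrib,
          Finset.sum_sub_distrib, Finset.sum_ite_eq, Finset.mem_univ, if_true, Finset.mul_sum]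
        simp only [mul_left_comm _ (1 / 2 : ℝ)]
  linarith

theorem IsCoalescent.tauWalk_two [Nonempty V] (hsymm : ∀ i j, w i j = w j i)
    (hdeg : ∀ i, 0 < deg w i) (hloop : ∀ i, w i i = 0) (hτ : IsCoalescent w τ) :
    tauWalk w τ 2 = ∑ i, statDist w i * remeet w τ i - 2 := by
  have hstep : ∀ i, stepN w 1 i i = 0 := fun i => by rw [stepN_one, step, hloop, zero_div]
  rw [hτ.tauWalk_succ hsymm hdeg, hτ.tauWalk_succ hsymm hdeg, hτ.tauWalk_zero]
  simp only [stepN_zero, if_true, mul_one, hstep, mul_zero, zero_mul, Finset.sum_const_zero]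
  ring

theorem IsCoalescent.tauWalk_three_sub_tauWalk_one [Nonempty V] (hsymm : ∀ i j, w i j = w j i)
    (hdeg : ∀ i, 0 < deg w i) (hloop : ∀ i, w i i = 0) (hτ : IsCoalescent w τ) :
    tauWalk w τ 3 - tauWalk w τ 1 = ∑ i, statDist w i * stepN w 2 i i * remeet w τ i - 2 := by
  have hstep : ∀ i, stepN w 1 i i = 0 := fun i => by rw [stepN_one, step, hloop, zero_div]
  rw [hτ.tauWalk_succ hsymm hdeg 2, hτ.tauWalk_succ hsymm hdeg 1]
  simp only [hstep, mul_zero, zero_mul, Finset.sum_const_zero]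
  ring

end RandomWalk

theorem _root_.Fin.add_one_ne_sub_one {n : ℕ} [NeZero n] (hn : 3 ≤ n) (a : Fin n) :
    a + 1 ≠ a - 1 := by
  intro h
  have h2 : (1 + 1 : Fin n) = 0 := by
    calc (1 + 1 : Fin n) = a + 1 - (a - 1) := by abel
      _ = 0 := by rw [h, sub_self]
  have := congrArg Fin.val h2
  simp only [Fin.val_add, Fin.val_one', Fin.val_zero, Nat.mod_eq_of_lt (show 1 < n by omega)]
    at this
  rw [Nat.mod_eq_of_lt (by omega)] at this
  omega

section Wheel
variable {n : ℕ} [NeZero n]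

theorem wheelW_symm (i j : Option (Fin n)) : wheelW n i j = wheelW n j i := by
  cases i <;> cases j <;> simp [wheelW, or_comm]

theorem wheelW_self (hn : 1 < n) : ∀ i : Option (Fin n), wheelW n i i = 0
  | none => rfl
  | some _ => if_neg fun h => by simp at h; omega

theorem sum_wheelW_some_some_mul (hn : 3 ≤ n) (a : Fin n) (X : Fin n → ℝ) :
    ∑ b, wheelW n (some a) (some b) * X b = X (a + 1) + X (a - 1) := by
  have hnbr : ∀ b, wheelW n (some a) (some b)
      = if b ∈ ({a + 1, a - 1} : Finset (Fin n)) then 1 else 0 := by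
    simp [wheelW, eq_sub_iff_add_eq, eq_comm (a := a)]
  simp only [hnbr, ite_mul, one_mul, zero_mul, Finset.sum_ite_mem, Finset.univ_inter,
    Finset.sum_pair (Fin.add_one_ne_sub_one hn a)]

theorem deg_wheelW_none : deg (wheelW n) none = n := by
  simp [deg, wheelW]

theorem deg_wheelW_some (hn : 3 ≤ n) (a : Fin n) : deg (wheelW n) (some a) = 3 := by
  have := sum_wheelW_some_some_mul hn a 1
  simp only [Pi.one_apply, mul_one] at this
  rw [deg, Fintype.sum_option, this]
  norm_num [wheelW]

theorem deg_wheelW_pos (hn : 3 ≤ n) (i : Option (Fin n)) : 0 < deg (wheelW n) i := by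
  cases i with
  | none => rw [deg_wheelW_none]; exact_mod_cast Nat.pos_of_ne_zero (NeZero.ne n)
  | some a => rw [deg_wheelW_some hn]; norm_num

theorem Wtot_wheelW (hn : 3 ≤ n) : Wtot (wheelW n) = 4 * n := by
  simp only [Wtot, Fintype.sum_option, deg_wheelW_none, deg_wheelW_some hn, sum_const, card_univ,
    Fintype.card_fin, nsmul_eq_mul]
  ring

theorem sum_statDist_wheelW_mul (hn : 3 ≤ n) (x : Option (Fin n) → ℝ) {c : ℝ}
    (hx : ∀ a, x (some a) = c) : ∑ i, statDist (wheelW n) i * x i = x none / 4 + 3 / 4 * c := by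
  have hn0 : (n : ℝ) ≠ 0 := Nat.cast_ne_zero.mpr (NeZero.ne n)
  simp only [statDist, Wtot_wheelW hn, Fintype.sum_option, deg_wheelW_none, deg_wheelW_some hn, hx,
    sum_const, card_univ, Fintype.card_fin, nsmul_eq_mul]
  field_simp

theorem sum_step_wheelW_none_mul (X : Option (Fin n) → ℝ) :
    ∑ k, step (wheelW n) none k * X k = (∑ b, X (some b)) / n := by
  simp [step, deg_wheelW_none, wheelW, Finset.sum_div, div_mul_eq_mul_div]

theorem sum_step_wheelW_some_mul (hn : 3 ≤ n) (a : Fin n) (X : Option (Fin n) → ℝ) :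
    ∑ k, step (wheelW n) (some a) k * X k
      = (X none + X (some (a + 1)) + X (some (a - 1))) / 3 := by
  simp only [step, deg_wheelW_some hn, Fintype.sum_option, div_mul_eq_mul_div, ← Finset.sum_div,
    sum_wheelW_some_some_mul hn a fun b => X (some b)]
  simp [wheelW, add_assoc]

theorem stepN_two_wheelW_none (hn : 3 ≤ n) : stepN (wheelW n) 2 none none = 1 / 3 := by
  have hn0 : (n : ℝ) ≠ 0 := Nat.cast_ne_zero.mpr (NeZero.ne n)
  rw [stepN_succ]
  simp only [stepN_one]
  rw [sum_step_wheelW_none_mul]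
  simp only [step, wheelW, deg_wheelW_some hn, one_div, sum_const, card_univ, Fintype.card_fin,
    nsmul_eq_mul]
  field_simp

theorem stepN_two_wheelW_some (hn : 3 ≤ n) (a : Fin n) :
    stepN (wheelW n) 2 (some a) (some a) = (1 / n + 2 / 3) / 3 := by
  rw [stepN_succ]
  simp only [stepN_one]
  rw [sum_step_wheelW_some_mul hn]
  simp only [step, wheelW, deg_wheelW_none, deg_wheelW_some hn, sub_add_cancel, or_true, true_or,
    if_true]
  ring

def wheelTau (A : ℝ) (f : Fin n → ℝ) : Option (Fin n) → Option (Fin n) → ℝ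
  | none, none => 0
  | none, some _ => A
  | some _, none => A
  | some a, some b => f (b - a)

theorem isCoalescent_wheelTau (hn : 3 ≤ n) {A : ℝ} {f : Fin n → ℝ} (hf0 : f 0 = 0)
    (hf_neg : ∀ e, f (-e) = f e) (hleaf : ∀ e ≠ 0, f e = 1 + (A + f (e - 1) + f (e + 1)) / 3)
    (hhub : 4 * n * A = 6 * n + 3 * ∑ e, f e) :
    IsCoalescent (wheelW n) (wheelTau A f) := by
  have hn0 : (n : ℝ) ≠ 0 := Nat.cast_ne_zero.mpr (NeZero.ne n)
  refine ⟨?_, ?_, ?_⟩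
  · rintro (_ | a) (_ | b) <;> simp only [wheelTau]
    rw [← neg_sub, hf_neg]
  · rintro (_ | a) <;> simp [wheelTau, hf0]
  · rintro (_ | a) (_ | b) hij <;> simp only [Finset.sum_add_distrib]
    · exact absurd rfl hij
    · rw [sum_step_wheelW_none_mul, sum_step_wheelW_some_mul hn]
      simp only [wheelTau]
      rw [show ∑ c, f (b - c) = ∑ e, f e from Equiv.sum_comp (Equiv.subLeft b) f]
      field_simp
      linarith
    · rw [sum_step_wheelW_none_mul, sum_step_wheelW_some_mul hn]
      simp only [wheelTau]
      rw [show ∑ c, f (c - a) = ∑ e, f e from Equiv.sum_comp (Equiv.subRight a) f]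
      field_simp
      linarith
    · rw [sum_step_wheelW_some_mul hn, sum_step_wheelW_some_mul hn]
      simp only [wheelTau]
      have hab : b - a ≠ 0 := sub_ne_zero.mpr fun h => hij (by rw [h])
      rw [show b - (a + 1) = b - a - 1 by abel, show b - (a - 1) = b - a + 1 by abel,
        show b + 1 - a = b - a + 1 by abel, show b - 1 - a = b - a - 1 by abel]
      linarith [hleaf (b - a) hab]

theorem remeet_wheelTau_none (A : ℝ) (f : Fin n → ℝ) :
    remeet (wheelW n) (wheelTau A f) none = 1 + A := by
  have hn0 : (n : ℝ) ≠ 0 := Nat.cast_ne_zero.mpr (NeZero.ne n)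
  rw [remeet, sum_step_wheelW_none_mul]
  simp only [wheelTau, sum_const, card_univ, Fintype.card_fin, nsmul_eq_mul]
  field_simp

theorem remeet_wheelTau_some (hn : 3 ≤ n) (A : ℝ) {f : Fin n → ℝ} (hf_neg : ∀ e, f (-e) = f e)
    (a : Fin n) : remeet (wheelW n) (wheelTau A f) (some a) = 1 + (A + 2 * f 1) / 3 := by
  rw [remeet, sum_step_wheelW_some_mul hn]
  simp only [wheelTau, add_sub_cancel_left, sub_sub_cancel_left, hf_neg]
  ring

theorem tauWalk_ratio_wheelW (hn : 3 ≤ n) {τ : Option (Fin n) → Option (Fin n) → ℝ}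
    (hτ : IsCoalescent (wheelW n) τ) {ℓ : ℝ} (hℓ : ∀ a, remeet (wheelW n) τ (some a) = ℓ) :
    tauWalk (wheelW n) τ 2 / (tauWalk (wheelW n) τ 3 - tauWalk (wheelW n) τ 1)
      = (remeet (wheelW n) τ none / 4 + 3 / 4 * ℓ - 2)
        / (remeet (wheelW n) τ none / 12 + (1 / n + 2 / 3) / 4 * ℓ - 2) := by
  have hsymm := wheelW_symm (n := n)
  have hdeg := deg_wheelW_pos hn
  have hloop := wheelW_self (n := n) (by omega)
  rw [hτ.tauWalk_two hsymm hdeg hloop, hτ.tauWalk_three_sub_tauWalk_one hsymm hdeg hloop]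
  simp only [mul_assoc]
  rw [sum_statDist_wheelW_mul hn _ hℓ,
    sum_statDist_wheelW_mul hn _ fun a => by rw [stepN_two_wheelW_some hn, hℓ],
    stepN_two_wheelW_none hn]
  ring_nf

end Wheel

section WheelSolution
open Topology

/-- The larger root of `r² = 3r - 1`, the characteristic equation of the leaf recurrence. -/
def wheelRoot : ℝ := (3 + √5) / 2

theorem wheelRoot_sq : wheelRoot ^ 2 = 3 * wheelRoot - 1 := by
  rw [wheelRoot]
  linear_combination (1 / 4 : ℝ) * Real.sq_sqrt (show (0 : ℝ) ≤ 5 by norm_num)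

theorem one_lt_wheelRoot : 1 < wheelRoot := by
  rw [wheelRoot]
  linarith [Real.sqrt_nonneg 5]

theorem wheelRoot_pos : 0 < wheelRoot := one_pos.trans one_lt_wheelRoot

theorem inv_wheelRoot : wheelRoot⁻¹ = (3 - √5) / 2 := by
  refine inv_eq_of_mul_eq_one_right ?_
  rw [wheelRoot]
  linear_combination (-1 / 4 : ℝ) * Real.sq_sqrt (show (0 : ℝ) ≤ 5 by norm_num)

theorem one_add_wheelRoot_pow_pos (n : ℕ) : 0 < 1 + wheelRoot ^ n := by
  positivity [wheelRoot_pos]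

def leafProfile (n d : ℕ) : ℝ := 1 - (wheelRoot ^ d + wheelRoot ^ (n - d)) / (1 + wheelRoot ^ n)

theorem leafProfile_zero (n : ℕ) : leafProfile n 0 = 0 := by
  have := (one_add_wheelRoot_pow_pos n).ne'
  rw [leafProfile, pow_zero, Nat.sub_zero, div_self this, sub_self]

theorem leafProfile_self (n : ℕ) : leafProfile n n = 0 := by
  have := (one_add_wheelRoot_pow_pos n).ne'
  rw [leafProfile, Nat.sub_self, pow_zero, add_comm, div_self this, sub_self]

theorem leafProfile_sub {n d : ℕ} (hd : d ≤ n) : leafProfile n (n - d) = leafProfile n d := by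
  rw [leafProfile, leafProfile, Nat.sub_sub_self hd, add_comm (wheelRoot ^ (n - d))]

theorem leafProfile_lt_one (n d : ℕ) : leafProfile n d < 1 := by
  have := one_add_wheelRoot_pow_pos n
  have := wheelRoot_pos
  rw [leafProfile, sub_lt_self_iff]
  positivity

theorem leafProfile_sub_one_add_leafProfile_add_one {n d : ℕ} (hd : 1 ≤ d) (hdn : d < n) :
    leafProfile n (d - 1) + leafProfile n (d + 1) = 3 * leafProfile n d - 1 := by
  obtain ⟨k, rfl⟩ := Nat.exists_eq_add_of_le' hd
  obtain ⟨l, hl⟩ := Nat.exists_eq_add_of_lt hdn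
  have h1 : n - k = l + 2 := by omega
  have h2 : n - (k + 1) = l + 1 := by omega
  have h3 : n - (k + 1 + 1) = l := by omega
  simp only [leafProfile, Nat.add_sub_cancel, h1, h2, h3]
  field_simp [(one_add_wheelRoot_pow_pos n).ne']
  linear_combination (-(wheelRoot ^ k) - wheelRoot ^ l) * wheelRoot_sq

theorem sum_range_leafProfile (n : ℕ) :
    ∑ d ∈ range n, leafProfile n d
      = n - (1 + wheelRoot) / (wheelRoot - 1) * ((wheelRoot ^ n - 1) / (1 + wheelRoot ^ n)) := by
  have hr : wheelRoot - 1 ≠ 0 := sub_ne_zero.mpr one_lt_wheelRoot.ne'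
  have hrefl : ∑ d ∈ range n, wheelRoot ^ (n - d) = wheelRoot * ∑ d ∈ range n, wheelRoot ^ d := by
    rw [← Finset.sum_range_reflect, Finset.mul_sum]
    refine Finset.sum_congr rfl fun d hd => ?_
    rw [Finset.mem_range] at hd
    rw [show n - (n - 1 - d) = d + 1 by omega, pow_succ']
  simp only [leafProfile, Finset.sum_sub_distrib, Finset.sum_const, Finset.card_range,
    nsmul_eq_mul, mul_one, ← Finset.sum_div, Finset.sum_add_distrib, hrefl,
    geom_sum_eq one_lt_wheelRoot.ne']
  field_simp

/-- Solves the hub equation `4nA = 6n + 3(3 + A) ∑_{d<n} leafProfile n d`. -/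
def hubTime (n : ℕ) : ℝ :=
  (6 * n + 9 * ∑ d ∈ range n, leafProfile n d) / (4 * n - 3 * ∑ d ∈ range n, leafProfile n d)

def leafTime (n d : ℕ) : ℝ := (3 + hubTime n) * leafProfile n d

def wheelCoalTime (n : ℕ) [NeZero n] : Option (Fin n) → Option (Fin n) → ℝ :=
  wheelTau (hubTime n) fun e => leafTime n e

theorem hubTime_mul {n : ℕ} (hn : n ≠ 0) :
    hubTime n * (4 * n - 3 * ∑ d ∈ range n, leafProfile n d)
      = 6 * n + 9 * ∑ d ∈ range n, leafProfile n d := by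
  have hlt : ∑ d ∈ range n, leafProfile n d < n := by
    calc ∑ d ∈ range n, leafProfile n d < ∑ d ∈ range n, (1 : ℝ) :=
          Finset.sum_lt_sum_of_nonempty (Finset.nonempty_range_iff.mpr hn)
            fun d _ => leafProfile_lt_one n d
      _ = n := by simp
  have hpos : (0 : ℝ) < n := Nat.cast_pos.mpr (Nat.pos_of_ne_zero hn)
  exact div_mul_cancel₀ _ (by linarith)

variable {n : ℕ} [NeZero n]

-- `e + 1` wraps around to `0` at `e = n - 1`, where `leafProfile n n = 0 = leafProfile n 0`.
theorem leafTime_val_add_one (e : Fin n) : leafTime n (e + 1 : Fin n) = leafTime n (e + 1) := by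
  rcases Nat.lt_or_ge (e + 1) n with h | h
  · rw [Fin.val_add_one_of_lt' h]
  · have hn : (e : ℕ) + 1 = n := by omega
    have hval : ((e + 1 : Fin n) : ℕ) = 0 := by
      rw [Fin.val_add, Fin.val_one', Nat.add_mod_mod, hn, Nat.mod_self]
    rw [hval, hn, leafTime, leafTime, leafProfile_zero, leafProfile_self]

theorem leafTime_val_neg (e : Fin n) : leafTime n (-e : Fin n) = leafTime n e := by
  rw [Fin.val_neg]
  split_ifs with he
  · simp [he]
  · rw [leafTime, leafTime, leafProfile_sub e.isLt.le]

theorem isCoalescent_wheelCoalTime (hn : 3 ≤ n) : IsCoalescent (wheelW n) (wheelCoalTime n) := by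
  apply isCoalescent_wheelTau hn
  · simp [leafTime, leafProfile_zero]
  · exact leafTime_val_neg
  · intro e he
    have hd : 1 ≤ (e : ℕ) := Nat.one_le_iff_ne_zero.mpr (Fin.val_ne_zero_iff.mpr he)
    rw [Fin.val_sub_one_of_ne_zero he, leafTime_val_add_one]
    simp only [leafTime]
    linear_combination -(3 + hubTime n) / 3 * leafProfile_sub_one_add_leafProfile_add_one hd e.isLt
  · rw [Fin.sum_univ_eq_sum_range (fun d => leafTime n d)]
    simp only [leafTime, ← Finset.mul_sum]
    linear_combination hubTime_mul (NeZero.ne n)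

theorem remeet_wheelCoalTime_none : remeet (wheelW n) (wheelCoalTime n) none = 1 + hubTime n :=
  remeet_wheelTau_none _ _

theorem remeet_wheelCoalTime_some (hn : 3 ≤ n) (a : Fin n) :
    remeet (wheelW n) (wheelCoalTime n) (some a) = 1 + (hubTime n + 2 * leafTime n 1) / 3 := by
  rw [wheelCoalTime, remeet_wheelTau_some hn _ leafTime_val_neg, Fin.val_one',
    Nat.mod_eq_of_lt (by omega)]

end WheelSolution

section WheelLimit
open Topology

theorem tendsto_add_mul_div_one_add (p q : ℝ) :
    Tendsto (fun x : ℝ => (p + q * x) / (1 + x)) atTop (𝓝 q) := by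
  have hinv : Tendsto (fun x : ℝ => (1 + x)⁻¹) atTop (𝓝 0) :=
    (tendsto_atTop_add_const_left _ 1 tendsto_id).inv_tendsto_atTop
  have hlim : Tendsto (fun x : ℝ => q + (p - q) * (1 + x)⁻¹) atTop (𝓝 q) := by
    simpa using (hinv.const_mul (p - q)).const_add q
  refine hlim.congr' ?_
  filter_upwards [eventually_gt_atTop 0] with x hx
  field_simp
  ring

theorem tendsto_wheelRoot_pow_ratio (p q : ℝ) :
    Tendsto (fun n : ℕ => (p + q * wheelRoot ^ n) / (1 + wheelRoot ^ n)) atTop (𝓝 q) :=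
  (tendsto_add_mul_div_one_add p q).comp (tendsto_pow_atTop_atTop_of_one_lt one_lt_wheelRoot)

theorem tendsto_sum_range_leafProfile_div :
    Tendsto (fun n : ℕ => (∑ d ∈ range n, leafProfile n d) / n) atTop (𝓝 1) := by
  have hlim := tendsto_const_nhds (x := (1 : ℝ)) |>.sub <|
    ((tendsto_wheelRoot_pow_ratio (-1) 1).const_mul
      ((1 + wheelRoot) / (wheelRoot - 1))).div_atTop tendsto_natCast_atTop_atTop
  rw [sub_zero] at hlim
  refine hlim.congr' ?_
  filter_upwards [eventually_ne_atTop 0] with n hn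
  rw [sum_range_leafProfile]
  field_simp
  ring

theorem tendsto_leafProfile_one :
    Tendsto (fun n : ℕ => leafProfile n 1) atTop (𝓝 (1 - wheelRoot⁻¹)) := by
  refine ((tendsto_wheelRoot_pow_ratio wheelRoot wheelRoot⁻¹).const_sub 1).congr' ?_
  filter_upwards [eventually_ge_atTop 1] with n hn
  rw [leafProfile, pow_one, pow_sub₀ _ wheelRoot_pos.ne' hn, pow_one, mul_comm]

theorem tendsto_hubTime : Tendsto hubTime atTop (𝓝 15) := by
  have hs := tendsto_sum_range_leafProfile_div
  have hlim := ((hs.const_mul 9).const_add 6).div ((hs.const_mul 3).const_sub 4) (by norm_num)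
  rw [show (6 + 9 * 1) / (4 - 3 * 1) = (15 : ℝ) by norm_num] at hlim
  refine hlim.congr' ?_
  filter_upwards [eventually_ne_atTop 0] with n hn
  have hn' : (n : ℝ) ≠ 0 := Nat.cast_ne_zero.mpr hn
  rw [Pi.div_apply, hubTime, ← mul_div_mul_left _ _ hn']
  congr 1 <;> field_simp

theorem tendsto_leafTime_one : Tendsto (fun n => leafTime n 1) atTop (𝓝 (9 * (√5 - 1))) := by
  have hlim := (tendsto_hubTime.const_add 3).mul tendsto_leafProfile_one
  rw [inv_wheelRoot, show (3 + 15 : ℝ) * (1 - (3 - √5) / 2) = 9 * (√5 - 1) by ring] at hlim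
  exact hlim

theorem tendsto_wheel_ratio :
    Tendsto (fun n : ℕ =>
      ((1 + hubTime n) / 4 + 3 / 4 * (1 + (hubTime n + 2 * leafTime n 1) / 3) - 2)
        / ((1 + hubTime n) / 12 + (1 / n + 2 / 3) / 4 * (1 + (hubTime n + 2 * leafTime n 1) / 3)
          - 2))
      atTop (𝓝 ((429 + 90 * √5) / 82)) := by
  have hhub := tendsto_hubTime.const_add 1
  have hleaf := (tendsto_hubTime.add (tendsto_leafTime_one.const_mul 2)).div_const 3 |>.const_add 1
  have hinv : Tendsto (fun n : ℕ => 1 / (n : ℝ)) atTop (𝓝 0) := tendsto_one_div_atTop_nhds_zero_nat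
  have h5 : (2 : ℝ) < √5 := by
    rw [show (2 : ℝ) = √4 by rw [show (4 : ℝ) = 2 ^ 2 by norm_num, Real.sqrt_sq (by norm_num)]]
    exact Real.sqrt_lt_sqrt (by norm_num) (by norm_num)
  have hden :
      (1 + 15) / 12 + (0 + 2 / 3) / 4 * (1 + (15 + 2 * (9 * (√5 - 1))) / 3) - 2 ≠ (0 : ℝ) := by
    nlinarith
  have hlim := (((hhub.div_const 4).add (hleaf.const_mul (3 / 4))).sub_const 2).div
    (((hhub.div_const 12).add (((hinv.add_const (2 / 3)).div_const 4).mul hleaf)).sub_const 2) hden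
  convert hlim using 2
  · rfl
  rw [div_eq_div_iff (by norm_num) hden]
  linear_combination (90 : ℝ) * Real.sq_sqrt (show (0 : ℝ) ≤ 5 by norm_num)

end WheelLimit

/-- if `bc n` is the critical benefit-to-cost ratio
`τ^{(2)}/(τ^{(3)} − τ^{(1)})` of the wheel graph with `n ≥ 3` leaves, then
`bc n → (429 + 90√5)/82` as `n → ∞`. -/
theorem wheel_bc_limit (bc : ℕ → ℝ)
    (hbc : ∀ (n : ℕ) [NeZero n], 3 ≤ n →
      ∀ τ : Option (Fin n) → Option (Fin n) → ℝ,
        IsCoalescent (wheelW n) τ →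
        bc n = tauWalk (wheelW n) τ 2 /
          (tauWalk (wheelW n) τ 3 - tauWalk (wheelW n) τ 1)) :
    Tendsto bc atTop (nhds ((429 + 90 * Real.sqrt 5) / 82)) := by
  refine tendsto_wheel_ratio.congr' ?_
  filter_upwards [eventually_ge_atTop 3] with n hn
  have : NeZero n := ⟨by omega⟩
  have hτ := isCoalescent_wheelCoalTime hn
  rw [hbc n hn _ hτ, tauWalk_ratio_wheelW hn hτ (remeet_wheelCoalTime_some hn),
    remeet_wheelCoalTime_none]

end EvoGraph
end
end

section
/- Let N ≥ 4 be even and let G be the two-island graph on N vertices: the vertex set is partitioned into two islands of size N/2 each, w_{ij} = 1 for distinct vertices i, j on the same island, w_{ij} = m for vertices on different islands where 0 < m < 1, and w_{ii} = 0. Then the critical benefit-to-cost ratio of G satisfies (b/c)* = (N(1 + m) − 2)² / (4(1 − Nm)); in particular, as m → 0⁺ this tends to (N − 2)²/4. -/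
/-!
The two-island graph is regular, so `π` is uniform and `τ^{(n)} = ⟨P^n, τ⟩ / N` for the
entrywise pairing `⟨M, τ⟩ = ∑ M_ij τ_ij` (`pairing`). The step matrix `P` lies in the commutative
algebra of matrices `a + b S + c J` (`islandMat`), where `S` is the same-island indicator
(`sameIsland`) and `J` the all-ones matrix (`ones`), and `⟨a + b S + c J, τ⟩ = b ⟨S, τ⟩ + c ⟨J, τ⟩`
because `τ` vanishes on the diagonal. Summing the coalescence equations against `S - 1` and
`J - 1`, which vanish on the diagonal, gives two linear equations for the two unknowns `⟨S, τ⟩`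
and `⟨J, τ⟩`. Hence `τ^{(1)}`, `τ^{(2)}`, `τ^{(3)}` are explicit, and the critical ratio is an
identity between rational functions of `N` and `m`.
-/

open Finset Filter Asymptotics

noncomputable section

namespace EvoGraph

variable {V : Type*} [Fintype V] [DecidableEq V]

/-- The two-island graph on `N = 2k` vertices: vertex `(b, i)` lies on island
`b : Bool`; distinct vertices on the same island are joined by weight-1 edges,
vertices on different islands by weight-`m` edges, and there are no self-loops. -/
def islandW (k : ℕ) (m : ℝ) : Bool × Fin k → Bool × Fin k → ℝ :=
  fun x y => if x.1 = y.1 then (if x.2 = y.2 then 0 else 1) else m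

open scoped Matrix

section General

variable {ι : Type*} [Fintype ι]

def pairing (M τ : Matrix ι ι ℝ) : ℝ := ∑ i, ∑ j, M i j * τ i j

lemma pairing_eq_trace (M τ : Matrix ι ι ℝ) : pairing M τ = (Mᵀ * τ).trace := by
  simp only [pairing, Matrix.trace, Matrix.diag, Matrix.mul_apply, Matrix.transpose_apply]
  exact Finset.sum_comm

lemma pairing_add_left (M N τ : Matrix ι ι ℝ) :
    pairing (M + N) τ = pairing M τ + pairing N τ := by
  simp only [pairing, Matrix.add_apply, add_mul, Finset.sum_add_distrib]

lemma pairing_smul_left (c : ℝ) (M τ : Matrix ι ι ℝ) :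
    pairing (c • M) τ = c * pairing M τ := by
  simp only [pairing, Matrix.smul_apply, smul_eq_mul, Finset.mul_sum, mul_assoc]

lemma pairing_one [DecidableEq ι] (τ : Matrix ι ι ℝ) : pairing 1 τ = ∑ i, τ i i := by
  simp [pairing, Matrix.one_apply]

lemma pairing_mul_left_right (M A τ : Matrix ι ι ℝ) :
    pairing M (A * τ) = pairing (Aᵀ * M) τ := by
  simp only [pairing_eq_trace, Matrix.transpose_mul, Matrix.transpose_transpose, Matrix.mul_assoc]

lemma pairing_mul_right_right (M A τ : Matrix ι ι ℝ) :
    pairing M (τ * Aᵀ) = pairing (M * A) τ := by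
  simp only [pairing_eq_trace, Matrix.transpose_mul, ← Matrix.mul_assoc]
  rw [Matrix.trace_mul_comm]
  simp only [Matrix.mul_assoc]

lemma statDist_eq_of_deg_eq {w : ι → ι → ℝ} {d : ℝ} (hd : ∀ i, deg w i = d) (hd0 : d ≠ 0)
    (i : ι) : statDist w i = 1 / Fintype.card ι := by
  simp only [statDist, Wtot, hd, Finset.sum_const, Finset.card_univ, nsmul_eq_mul]
  field_simp

lemma stepMat_eq_of_deg_eq {w : ι → ι → ℝ} {d : ℝ} (hd : ∀ i, deg w i = d) :
    stepMat w = d⁻¹ • Matrix.of w := by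
  ext i j
  simp [stepMat, step, hd, div_eq_inv_mul]

theorem IsCoalescent.pairing_eq {w : ι → ι → ℝ} {τ : Matrix ι ι ℝ} (hτ : IsCoalescent w τ)
    {M : Matrix ι ι ℝ} (hM : ∀ i, M i i = 0) :
    pairing M τ = ∑ i, ∑ j, M i j +
      (1 / 2) * (pairing ((stepMat w)ᵀ * M) τ + pairing (M * stepMat w) τ) := by
  obtain ⟨-, -, heq⟩ := hτ
  have hpt : ∀ i j, M i j * τ i j = M i j + (1 / 2) *
      (M i j * (stepMat w * τ) i j + M i j * (τ * (stepMat w)ᵀ) i j) := by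
    intro i j
    rcases eq_or_ne i j with rfl | hij
    · simp [hM]
    · simp only [heq i j hij, Matrix.mul_apply, Matrix.transpose_apply, stepMat,
        Matrix.of_apply, Finset.sum_add_distrib]
      simp only [mul_comm (τ i _)]
      ring
  rw [← pairing_mul_left_right, ← pairing_mul_right_right]
  simp only [pairing, hpt, mul_add, Finset.sum_add_distrib, ← Finset.mul_sum]

end General

lemma tauWalk_eq_pairing_of_statDist_eq {w τ : V → V → ℝ} {c : ℝ}
    (hc : ∀ i, statDist w i = c) (n : ℕ) :
    tauWalk w τ n = c * pairing (stepMat w ^ n) τ := by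
  simp only [tauWalk, pairing, stepN, hc, Finset.mul_sum, mul_assoc]

def ones (ι : Type*) : Matrix ι ι ℝ := Matrix.of fun _ _ => 1

lemma ones_transpose {ι : Type*} : (ones ι)ᵀ = ones ι := rfl

lemma ones_mul_ones {ι : Type*} [Fintype ι] :
    ones ι * ones ι = (Fintype.card ι : ℝ) • ones ι := by
  ext
  simp [ones, Matrix.mul_apply]

section IslandMatrices

variable {k : ℕ}

def sameIsland (k : ℕ) : Matrix (Bool × Fin k) (Bool × Fin k) ℝ :=
  Matrix.of fun x y => if x.1 = y.1 then 1 else 0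

lemma sameIsland_transpose : (sameIsland k)ᵀ = sameIsland k := by
  ext x y
  simp [sameIsland, eq_comm]

lemma sum_sameIsland_mul (x : Bool × Fin k) (f : Bool × Fin k → ℝ) :
    ∑ y, sameIsland k x y * f y = ∑ t, f (x.1, t) := by
  obtain ⟨b, t⟩ := x
  cases b <;> simp [sameIsland, Fintype.sum_prod_type]

lemma sameIsland_mul_sameIsland : sameIsland k * sameIsland k = (k : ℝ) • sameIsland k := by
  ext x y
  rw [Matrix.mul_apply, sum_sameIsland_mul]
  simp only [sameIsland, Matrix.of_apply, Matrix.smul_apply, smul_eq_mul]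
  split_ifs <;> simp

lemma sameIsland_mul_ones : sameIsland k * ones _ = (k : ℝ) • ones _ := by
  ext x y
  rw [Matrix.mul_apply, sum_sameIsland_mul]
  simp [ones]

lemma ones_mul_sameIsland : ones _ * sameIsland k = (k : ℝ) • ones _ := by
  simpa [Matrix.transpose_mul, sameIsland_transpose, ones_transpose] using
    congrArg Matrix.transpose (sameIsland_mul_ones (k := k))

def islandMat (k : ℕ) (a b c : ℝ) : Matrix (Bool × Fin k) (Bool × Fin k) ℝ :=
  a • 1 + b • sameIsland k + c • ones _

lemma islandMat_apply (a b c : ℝ) (x y : Bool × Fin k) :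
    islandMat k a b c x y = (if x = y then a else 0) + (if x.1 = y.1 then b else 0) + c := by
  simp [islandMat, sameIsland, ones, Matrix.one_apply]

lemma islandMat_mul (a b c a' b' c' : ℝ) :
    islandMat k a b c * islandMat k a' b' c' =
      islandMat k (a * a') (a * b' + b * a' + k * b * b')
        (a * c' + c * a' + k * (b * c' + c * b') + 2 * k * c * c') := by
  simp only [islandMat, add_mul, mul_add, Matrix.smul_mul, Matrix.mul_smul, Matrix.one_mul,
    Matrix.mul_one, sameIsland_mul_sameIsland, sameIsland_mul_ones, ones_mul_sameIsland,
    ones_mul_ones, Fintype.card_prod, Fintype.card_bool, Fintype.card_fin]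
  push_cast
  module

lemma islandMat_transpose (a b c : ℝ) : (islandMat k a b c)ᵀ = islandMat k a b c := by
  simp [islandMat, sameIsland_transpose, ones_transpose]

lemma smul_islandMat (r a b c : ℝ) :
    r • islandMat k a b c = islandMat k (r * a) (r * b) (r * c) := by
  simp only [islandMat, smul_add, smul_smul]

lemma sum_islandMat_apply (a b c : ℝ) (x : Bool × Fin k) :
    ∑ y, islandMat k a b c x y = a + k * b + 2 * k * c := by
  obtain ⟨e, t⟩ := x
  cases e <;> simp [islandMat_apply, Finset.sum_add_distrib, Fintype.sum_prod_type]

lemma pairing_islandMat {τ : Matrix (Bool × Fin k) (Bool × Fin k) ℝ} (hτ : ∀ x, τ x x = 0)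
    (a b c : ℝ) :
    pairing (islandMat k a b c) τ = b * pairing (sameIsland k) τ + c * pairing (ones _) τ := by
  simp [islandMat, pairing_add_left, pairing_smul_left, pairing_one, hτ]

theorem IsCoalescent.islandMat_eq {w : Bool × Fin k → Bool × Fin k → ℝ}
    {τ : Matrix (Bool × Fin k) (Bool × Fin k) ℝ} (hτ : IsCoalescent w τ)
    {α β γ : ℝ} (hP : stepMat w = islandMat k α β γ) {a b c : ℝ} (habc : a + b + c = 0) :
    b * pairing (sameIsland k) τ + c * pairing (ones _) τ =
      2 * k * (a + k * b + 2 * k * c) + (α * b + β * a + k * β * b) * pairing (sameIsland k) τ +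
        (α * c + γ * a + k * (β * c + γ * b) + 2 * k * γ * c) * pairing (ones _) τ := by
  have hM : ∀ x, islandMat k a b c x x = 0 := fun x => by simp [islandMat_apply, habc]
  have h := hτ.pairing_eq hM
  simp only [hP, islandMat_transpose, islandMat_mul, pairing_islandMat hτ.2.1,
    sum_islandMat_apply, Finset.sum_const, Finset.card_univ, Fintype.card_prod, Fintype.card_bool,
    Fintype.card_fin, nsmul_eq_mul] at h
  push_cast at h
  linear_combination h

end IslandMatrices

section TwoIslands

variable {k : ℕ} {m : ℝ} {τ : Bool × Fin k → Bool × Fin k → ℝ}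

lemma islandW_eq_islandMat : islandW k m = islandMat k (-1) (1 - m) m := by
  ext x y
  simp only [islandMat_apply, islandW, Prod.ext_iff]
  split_ifs <;> simp_all
  ring

lemma deg_islandW (x : Bool × Fin k) : deg (islandW k m) x = k - 1 + k * m := by
  rw [deg, islandW_eq_islandMat, sum_islandMat_apply]
  ring

lemma stepMat_islandW :
    stepMat (islandW k m) = islandMat k (-1 / (k - 1 + k * m)) ((1 - m) / (k - 1 + k * m))
      (m / (k - 1 + k * m)) := by
  rw [stepMat_eq_of_deg_eq deg_islandW, islandW_eq_islandMat]
  exact (smul_islandMat _ _ _ _).trans (by simp only [inv_mul_eq_div])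

theorem IsCoalescent.pairings_islandW (hτ : IsCoalescent (islandW k m) τ) (hk : k ≠ 0)
    (hm : 0 < m) :
    pairing (sameIsland k) τ = 4 * k * (k - 1) * (k - 1 + k * m) / (1 + m) ∧
      pairing (ones _) τ = 2 * pairing (sameIsland k) τ + 2 * k * (k - 1 + k * m) / m := by
  have hk1 : (1 : ℝ) ≤ k := Nat.one_le_cast.mpr (Nat.pos_of_ne_zero hk)
  have hd : (0 : ℝ) < k - 1 + k * m := by positivity
  have hsame := hτ.islandMat_eq stepMat_islandW (a := -1) (b := 1) (c := 0) (by ring)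
  have hall := hτ.islandMat_eq stepMat_islandW (a := -1) (b := 0) (c := 1) (by ring)
  field_simp at hsame hall
  have hA : (1 + m) * pairing (sameIsland k) τ = 4 * k * (k - 1) * (k - 1 + k * m) :=
    mul_left_cancel₀ (show (k : ℝ) ≠ 0 by positivity)
      (by linear_combination hsame + (k - 1) * hall)
  constructor
  · rw [eq_div_iff (by positivity)]
    linear_combination hA
  · rw [← sub_eq_iff_eq_add', eq_div_iff hm.ne']
    linear_combination hall - hA

lemma tauWalk_islandW_of_stepMat_pow (hd : (k - 1 + k * m : ℝ) ≠ 0) (hτ : ∀ x, τ x x = 0)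
    {n : ℕ} {a b c : ℝ} (hn : stepMat (islandW k m) ^ n = islandMat k a b c) :
    tauWalk (islandW k m) τ n =
      (b * pairing (sameIsland k) τ + c * pairing (ones _) τ) / (2 * k) := by
  rw [tauWalk_eq_pairing_of_statDist_eq (statDist_eq_of_deg_eq deg_islandW hd), hn,
    pairing_islandMat hτ]
  simp only [Fintype.card_prod, Fintype.card_bool, Fintype.card_fin]
  push_cast
  ring

theorem IsCoalescent.tauWalk_islandW (hτ : IsCoalescent (islandW k m) τ) (hk : k ≠ 0)
    (hm : 0 < m) :
    tauWalk (islandW k m) τ 2 = 2 * (k - 1) * (k + k * m) / (k * (1 + m)) ∧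
      tauWalk (islandW k m) τ 3 - tauWalk (islandW k m) τ 1 =
        (1 - 2 * k * m) / (k - 1 + k * m) ^ 2 * tauWalk (islandW k m) τ 2 := by
  have hk1 : (1 : ℝ) ≤ k := Nat.one_le_cast.mpr (Nat.pos_of_ne_zero hk)
  have hd : (0 : ℝ) < k - 1 + k * m := by positivity
  obtain ⟨hA, hS⟩ := hτ.pairings_islandW hk hm
  have hP := stepMat_islandW (k := k) (m := m)
  rw [tauWalk_islandW_of_stepMat_pow hd.ne' hτ.2.1 (n := 1) (by rw [pow_one, hP]),
    tauWalk_islandW_of_stepMat_pow hd.ne' hτ.2.1 (n := 2) (by rw [sq, hP, islandMat_mul]),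
    tauWalk_islandW_of_stepMat_pow hd.ne' hτ.2.1 (n := 3)
      (by rw [pow_succ, sq, hP, islandMat_mul, islandMat_mul]), hS, hA]
  constructor <;> field_simp <;> ring

end TwoIslands

theorem twoIslands_bc_general (k : ℕ) (hk : 2 ≤ k) (m : ℝ) (hm0 : 0 < m)
    (τ : Bool × Fin k → Bool × Fin k → ℝ)
    (hτ : IsCoalescent (islandW k m) τ) :
    tauWalk (islandW k m) τ 2 /
        (tauWalk (islandW k m) τ 3 - tauWalk (islandW k m) τ 1) =
      ((2 * k : ℝ) * (1 + m) - 2) ^ 2 / (4 * (1 - (2 * k : ℝ) * m)) ∧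
    Tendsto
      (fun m' : ℝ => ((2 * k : ℝ) * (1 + m') - 2) ^ 2 / (4 * (1 - (2 * k : ℝ) * m')))
      (nhdsWithin 0 (Set.Ioi 0)) (nhds (((2 * k : ℝ) - 2) ^ 2 / 4)) := by
  obtain ⟨h2, h31⟩ := hτ.tauWalk_islandW (by omega) hm0
  have hk1 : (0 : ℝ) < k - 1 := by
    have : (2 : ℝ) ≤ k := by exact_mod_cast hk
    linarith
  have h2pos : 0 < tauWalk (islandW k m) τ 2 := by
    rw [h2]
    exact div_pos (mul_pos (mul_pos two_pos hk1) (by positivity)) (by positivity)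
  refine ⟨?_, ?_⟩
  · rw [h31, div_mul_cancel_right₀ h2pos.ne', inv_div, ← div_div]
    congr 1
    ring
  · have hcont : ContinuousAt
        (fun m' : ℝ => ((2 * k : ℝ) * (1 + m') - 2) ^ 2 / (4 * (1 - (2 * k : ℝ) * m'))) 0 := by
      fun_prop (disch := norm_num)
    simpa using hcont.tendsto.mono_left nhdsWithin_le_nhds

/-- for two equal islands of size `N/2` (`N = 2k ≥ 4` even) with
migration weight `0 < m < 1`, `(b/c)* = (N(1 + m) − 2)²/(4(1 − Nm))`; as
`m → 0⁺` this tends to `(N − 2)²/4`. -/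
theorem twoIslands_bc (k : ℕ) (hk : 2 ≤ k) (m : ℝ) (hm0 : 0 < m) (hm1 : m < 1)
    (τ : Bool × Fin k → Bool × Fin k → ℝ)
    (hτ : IsCoalescent (islandW k m) τ) :
    tauWalk (islandW k m) τ 2 /
        (tauWalk (islandW k m) τ 3 - tauWalk (islandW k m) τ 1) =
      ((2 * k : ℝ) * (1 + m) - 2) ^ 2 / (4 * (1 - (2 * k : ℝ) * m)) ∧
    Tendsto
      (fun m' : ℝ => ((2 * k : ℝ) * (1 + m') - 2) ^ 2 / (4 * (1 - (2 * k : ℝ) * m')))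
      (nhdsWithin 0 (Set.Ioi 0)) (nhds (((2 * k : ℝ) - 2) ^ 2 / 4)) :=
  twoIslands_bc_general k hk m hm0 τ hτ

end EvoGraph
end
end

section
/- Let N ≥ 4 be even and let G be the complete graph on N vertices with a weighted perfect matching: the vertices are partitioned into N/2 pairs, w_{ij} = w > 0 if i and j are partners in the matching, w_{ij} = 1 for all other distinct pairs i, j, and w_{ii} = 0. Then, provided (w − 2)² ≠ N, the critical benefit-to-cost ratio of G satisfies (b/c)* = (w − 2 + N)² / ((w − 2)² − N). In particular (b/c)* is positive if and only if w > √N + 2, and (b/c)* → 1 as w → ∞. -/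
/-!
Let `M` be the permutation matrix of the partner involution and `J` the all-ones matrix. The
weight matrix is `A = -1 + (w - 1) M + J`, and `1, M, J` span a commutative algebra
(`M² = 1`, `MJ = JM = J`, `J² = N J`). The coalescence system has a solution in this algebra,
and it is the only one by a maximum principle, since every off-diagonal step probability is
positive. The graph is regular with degree `d = w + N - 2`, so `τ⁽ⁿ⁾ = tr (Aⁿ τ) / (dⁿ N)`;
computing in the algebra gives `τ⁽²⁾ = c (w - 2 + N)²` and `τ⁽³⁾ - τ⁽¹⁾ = c ((w - 2)² - N)`
with `c = (N - 2) / d² ≠ 0`.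
-/

open Finset Filter Asymptotics

noncomputable section

namespace EvoGraph

variable {V : Type*} [Fintype V] [DecidableEq V]

/-- The complete graph on `N = 2k` vertices with a weighted perfect matching:
the partner of `(i, b)` is `(i, !b)`; partners are joined by a weight-`wgt`
edge, all other distinct pairs by weight-1 edges, and there are no self-loops. -/
def matchW (k : ℕ) (wgt : ℝ) : Fin k × Bool → Fin k × Bool → ℝ :=
  fun x y => if x.1 = y.1 then (if x.2 = y.2 then 0 else wgt) else 1

open scoped Matrix

section PairScheme

variable (σ : Equiv.Perm V)

def onesMat : Matrix V V ℝ := Matrix.of fun _ _ => 1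

def pairMat (α β γ : ℝ) : Matrix V V ℝ :=
  α • 1 + β • σ.permMatrix ℝ + γ • onesMat

omit [Fintype V] in
lemma pairMat_apply (α β γ : ℝ) (i j : V) :
    pairMat σ α β γ i j = (if i = j then α else 0) + (if σ i = j then β else 0) + γ := by
  simp [pairMat, onesMat, Matrix.one_apply, PEquiv.toMatrix_apply]

lemma permMatrix_mul_onesMat : σ.permMatrix ℝ * onesMat = onesMat := by
  ext i j; simp [onesMat, Matrix.mul_apply, PEquiv.toMatrix_apply]

lemma onesMat_mul_permMatrix : onesMat * σ.permMatrix ℝ = onesMat := by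
  ext i j; simp [onesMat, Matrix.mul_apply, PEquiv.toMatrix_apply, ← Equiv.eq_symm_apply]

omit [DecidableEq V] in
lemma onesMat_mul_onesMat :
    (onesMat : Matrix V V ℝ) * onesMat = (Fintype.card V : ℝ) • onesMat := by
  ext i j; simp [onesMat, Matrix.mul_apply]

variable {σ}

lemma pairMat_mul (hσ : Function.Involutive σ) (α β γ α' β' γ' : ℝ) :
    pairMat σ α β γ * pairMat σ α' β' γ' =
      pairMat σ (α * α' + β * β') (α * β' + β * α')
        (α * γ' + β * γ' + γ * α' + γ * β' + Fintype.card V * γ * γ') := by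
  have hMM : σ.permMatrix ℝ * σ.permMatrix ℝ = 1 := by
    rw [← Matrix.permMatrix_mul, show σ * σ = 1 from Equiv.ext hσ, Matrix.permMatrix_one]
  simp only [pairMat, add_mul, mul_add, Matrix.smul_mul, Matrix.mul_smul, Matrix.one_mul,
    Matrix.mul_one, hMM, permMatrix_mul_onesMat, onesMat_mul_permMatrix, onesMat_mul_onesMat]
  module

omit [Fintype V] in
lemma transpose_pairMat (hσ : Function.Involutive σ) (α β γ : ℝ) :
    (pairMat σ α β γ)ᵀ = pairMat σ α β γ := by
  ext i j
  have hji : σ j = i ↔ σ i = j := ⟨fun h => by rw [← h, hσ], fun h => by rw [← h, hσ]⟩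
  simp only [Matrix.transpose_apply, pairMat_apply, eq_comm (a := j), hji]

lemma trace_pairMat (hfix : ∀ i, σ i ≠ i) (α β γ : ℝ) :
    (pairMat σ α β γ).trace = Fintype.card V * (α + γ) := by
  simp [Matrix.trace, pairMat_apply, hfix, mul_add]

lemma sum_pairMat_apply (α β γ : ℝ) (i : V) :
    ∑ j, pairMat σ α β γ i j = α + β + Fintype.card V * γ := by
  simp [pairMat_apply, Finset.sum_add_distrib]

end PairScheme

section RandomWalk

variable {w : V → V → ℝ}

omit [DecidableEq V] in
lemma step_nonneg (hw : ∀ i j, 0 ≤ w i j) (i j : V) : 0 ≤ step w i j :=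
  div_nonneg (hw i j) (sum_nonneg fun l _ => hw i l)

omit [DecidableEq V] in
lemma step_pos (hw : ∀ i j, 0 ≤ w i j) {i j : V} (hij : 0 < w i j) : 0 < step w i j :=
  div_pos hij (hij.trans_le (single_le_sum (fun l _ => hw i l) (mem_univ j)))

omit [DecidableEq V] in
lemma sum_step {i : V} (hi : deg w i ≠ 0) : ∑ j, step w i j = 1 := by
  rw [← div_self hi, deg, sum_div]
  rfl

omit [DecidableEq V] in
lemma statDist_of_deg_eq {d : ℝ} (hd : d ≠ 0) (hdeg : ∀ i, deg w i = d) (i : V) :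
    statDist w i = 1 / Fintype.card V := by
  rw [statDist, Wtot, hdeg, sum_congr rfl fun j _ => hdeg j, sum_const, card_univ,
    nsmul_eq_mul, div_mul_cancel_right₀ hd, one_div]

lemma tauWalk_of_deg_eq {d : ℝ} (hd : d ≠ 0) (hdeg : ∀ i, deg w i = d) (τ : V → V → ℝ)
    (n : ℕ) :
    tauWalk w τ n = (stepMat w ^ n * (Matrix.of τ)ᵀ).trace / Fintype.card V := by
  rw [← Matrix.sum_hadamard_eq, sum_div, tauWalk]
  refine sum_congr rfl fun i _ => ?_
  rw [sum_div]
  refine sum_congr rfl fun j _ => ?_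
  rw [statDist_of_deg_eq hd hdeg, stepN, Matrix.hadamard_apply, Matrix.of_apply]
  ring

omit [DecidableEq V] in
lemma sum_step_mul_add_step_mul (τ : V → V → ℝ) (i j : V) :
    ∑ l, (step w i l * τ l j + step w j l * τ i l) =
      (stepMat w * Matrix.of τ + Matrix.of τ * (stepMat w)ᵀ) i j := by
  simp [Matrix.mul_apply, stepMat, sum_add_distrib, mul_comm]

end RandomWalk

lemma abs_sum_mul_le_of_eq_zero {ι : Type*} [Fintype ι] [DecidableEq ι] {p x : ι → ℝ} {m : ℝ}
    (hp : ∀ l, 0 ≤ p l) (hp1 : ∑ l, p l = 1) (hx : ∀ l, |x l| ≤ m) {j : ι} (hj : x j = 0) :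
    |∑ l, p l * x l| ≤ (1 - p j) * m := by
  have hxj : ∀ l, |x l| ≤ m - if l = j then m else 0 := fun l => by
    split_ifs with h
    · simp [h, hj]
    · simpa using hx l
  calc |∑ l, p l * x l| ≤ ∑ l, |p l * x l| := abs_sum_le_sum_abs _ _
    _ = ∑ l, p l * |x l| := by simp only [abs_mul, abs_of_nonneg (hp _)]
    _ ≤ ∑ l, p l * (m - if l = j then m else 0) :=
        sum_le_sum fun l _ => mul_le_mul_of_nonneg_left (hxj l) (hp l)
    _ = (1 - p j) * m := by simp [mul_sub, ← sum_mul, hp1, sub_mul]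

theorem eq_zero_of_eq_half_sum {p δ : V → V → ℝ} (hp : ∀ i j, 0 ≤ p i j)
    (hp1 : ∀ i, ∑ l, p i l = 1) (hpos : ∀ i j, i ≠ j → 0 < p i j) (hδ0 : ∀ i, δ i i = 0)
    (hδ : ∀ i j, i ≠ j → δ i j = (∑ l, p i l * δ l j + ∑ l, p j l * δ i l) / 2) :
    δ = 0 := by
  rcases isEmpty_or_nonempty V with hV | hV
  · ext i; exact isEmptyElim i
  obtain ⟨⟨i, j⟩, hmax⟩ := Finite.exists_max fun q : V × V => |δ q.1 q.2|
  have hle : ∀ a b, |δ a b| ≤ |δ i j| := fun a b => hmax (a, b)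
  suffices |δ i j| ≤ 0 by ext a b; exact abs_nonpos_iff.mp ((hle a b).trans this)
  rcases eq_or_ne i j with rfl | hij
  · simp [hδ0]
  have h1 := abs_sum_mul_le_of_eq_zero (hp i) (hp1 i) (fun l => hle l j) (hδ0 j)
  have h2 := abs_sum_mul_le_of_eq_zero (hp j) (hp1 j) (fun l => hle i l) (hδ0 i)
  have hcontr : |δ i j| ≤ ((1 - p i j) * |δ i j| + (1 - p j i) * |δ i j|) / 2 :=
    calc |δ i j| = |∑ l, p i l * δ l j + ∑ l, p j l * δ i l| / 2 := by
          rw [hδ i j hij, abs_div, abs_two]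
      _ ≤ (|∑ l, p i l * δ l j| + |∑ l, p j l * δ i l|) / 2 := by gcongr; exact abs_add_le _ _
      _ ≤ _ := by gcongr
  nlinarith [hpos i j hij, hpos j i hij.symm, abs_nonneg (δ i j)]

theorem IsCoalescent.unique {w τ τ' : V → V → ℝ} (hw : ∀ i j, 0 ≤ w i j)
    (hoff : ∀ i j, i ≠ j → 0 < w i j) (hdeg : ∀ i, deg w i ≠ 0)
    (hτ : IsCoalescent w τ) (hτ' : IsCoalescent w τ') : τ = τ' := by
  suffices (fun i j => τ i j - τ' i j) = 0 by
    ext i j; exact sub_eq_zero.mp (congrFun₂ this i j)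
  refine eq_zero_of_eq_half_sum (step_nonneg hw) (fun i => sum_step (hdeg i))
    (fun i j hij => step_pos hw (hoff i j hij)) (fun i => by simp [hτ.2.1, hτ'.2.1])
    (fun i j hij => ?_)
  simp only [mul_sub, sum_sub_distrib, hτ.2.2 i j hij, hτ'.2.2 i j hij, sum_add_distrib]
  ring

section Matching

variable {k : ℕ} {wgt : ℝ}

def partner (k : ℕ) : Equiv.Perm (Fin k × Bool) :=
  Equiv.prodCongrRight fun _ => Equiv.boolNot

lemma partner_involutive : Function.Involutive (partner k) := fun _ =>
  Prod.ext rfl (Bool.not_not _)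

lemma partner_ne (x : Fin k × Bool) : partner k x ≠ x := by
  simp [partner, Equiv.boolNot, Prod.ext_iff]

lemma card_fin_prod_bool : (Fintype.card (Fin k × Bool) : ℝ) = 2 * k := by
  simp [mul_comm]

lemma matchW_eq_pairMat : matchW k wgt = pairMat (partner k) (-1) (wgt - 1) 1 := by
  ext ⟨i, a⟩ ⟨j, b⟩
  rw [pairMat_apply]
  by_cases hij : i = j
  · subst hij
    cases a <;> cases b <;> simp [matchW, partner, Equiv.boolNot]
  · simp [matchW, partner, hij]

lemma deg_matchW (i : Fin k × Bool) : deg (matchW k wgt) i = wgt + 2 * k - 2 := by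
  rw [deg, matchW_eq_pairMat, sum_pairMat_apply, card_fin_prod_bool]
  ring

lemma matchW_nonneg (hw : 0 ≤ wgt) (i j : Fin k × Bool) : 0 ≤ matchW k wgt i j := by
  unfold matchW
  split_ifs <;> linarith

lemma matchW_pos (hw : 0 < wgt) {i j : Fin k × Bool} (hij : i ≠ j) : 0 < matchW k wgt i j := by
  unfold matchW
  split_ifs with h1 h2
  · exact absurd (Prod.ext h1 h2) hij
  · exact hw
  · exact one_pos

lemma stepMat_matchW :
    stepMat (matchW k wgt) = (wgt + 2 * k - 2)⁻¹ • pairMat (partner k) (-1) (wgt - 1) 1 := by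
  ext i j
  rw [stepMat, Matrix.of_apply, step, deg_matchW, matchW_eq_pairMat, Matrix.smul_apply,
    smul_eq_mul, div_eq_inv_mul]

/- With `d = w + N - 2`, partners coalesce in time `a = 2b - d` and all other pairs in time
`b`; this `b` solves `a = 1 + (N - 2) b / d` and `b = 1 + (a + (d - 2) b) / d`. -/
def matchTime (k : ℕ) (wgt : ℝ) : ℝ :=
  (wgt + 2 * k - 2) * (wgt + 2 * k - 1) / (2 * (wgt + k - 1))

def matchTau (k : ℕ) (wgt : ℝ) : Fin k × Bool → Fin k × Bool → ℝ :=
  pairMat (partner k) (-matchTime k wgt) (matchTime k wgt - (wgt + 2 * k - 2)) (matchTime k wgt)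

lemma of_matchTau : Matrix.of (matchTau k wgt) =
    pairMat (partner k) (-matchTime k wgt) (matchTime k wgt - (wgt + 2 * k - 2))
      (matchTime k wgt) :=
  rfl

lemma isCoalescent_matchTau (hk : 0 < k) (hw : 0 < wgt) :
    IsCoalescent (matchW k wgt) (matchTau k wgt) := by
  have hk' : (1 : ℝ) ≤ k := by exact_mod_cast hk
  have hd : wgt + 2 * k - 2 ≠ 0 := by linarith
  have hD : wgt + k - 1 ≠ 0 := by linarith
  refine ⟨fun i j => congrFun₂ (transpose_pairMat partner_involutive _ _ _) j i,
    fun i => by simp [matchTau, pairMat_apply, partner_ne], fun i j hij => ?_⟩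
  rw [sum_step_mul_add_step_mul, ← Matrix.of_apply (matchTau k wgt) i j, stepMat_matchW,
    Matrix.transpose_smul, transpose_pairMat partner_involutive, Matrix.smul_mul, Matrix.mul_smul]
  simp only [of_matchTau, pairMat_mul partner_involutive, Matrix.add_apply,
    Matrix.smul_apply, smul_eq_mul, pairMat_apply, if_neg hij, card_fin_prod_bool, matchTime]
  split_ifs <;> field_simp <;> ring

lemma tauWalk_matchTau (hk : 0 < k) (hw : 0 < wgt) (n : ℕ) :
    tauWalk (matchW k wgt) (matchTau k wgt) n =
      (pairMat (partner k) (-1) (wgt - 1) 1 ^ n * Matrix.of (matchTau k wgt)).trace /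
        ((wgt + 2 * k - 2) ^ n * (2 * k)) := by
  have hk' : (1 : ℝ) ≤ k := by exact_mod_cast hk
  have hd : wgt + 2 * k - 2 ≠ 0 := by linarith
  rw [tauWalk_of_deg_eq hd deg_matchW, stepMat_matchW, smul_pow, Matrix.smul_mul,
    Matrix.trace_smul, card_fin_prod_bool, smul_eq_mul, inv_pow, inv_mul_eq_div, div_div,
    of_matchTau, transpose_pairMat partner_involutive]

lemma tauWalk_two_matchTau (hk : 0 < k) (hw : 0 < wgt) :
    tauWalk (matchW k wgt) (matchTau k wgt) 2 =
      (2 * k - 2) / (wgt + 2 * k - 2) ^ 2 * (wgt - 2 + 2 * k) ^ 2 := by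
  have hk' : (1 : ℝ) ≤ k := by exact_mod_cast hk
  have hd : wgt + 2 * k - 2 ≠ 0 := by linarith
  have hD : wgt + k - 1 ≠ 0 := by linarith
  rw [tauWalk_matchTau hk hw]
  simp only [of_matchTau, pow_succ, pow_zero, Matrix.one_mul, pairMat_mul partner_involutive,
    trace_pairMat partner_ne, card_fin_prod_bool, matchTime]
  field_simp
  ring

lemma tauWalk_three_sub_one_matchTau (hk : 0 < k) (hw : 0 < wgt) :
    tauWalk (matchW k wgt) (matchTau k wgt) 3 - tauWalk (matchW k wgt) (matchTau k wgt) 1 =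
      (2 * k - 2) / (wgt + 2 * k - 2) ^ 2 * ((wgt - 2) ^ 2 - 2 * k) := by
  have hk' : (1 : ℝ) ≤ k := by exact_mod_cast hk
  have hd : wgt + 2 * k - 2 ≠ 0 := by linarith
  have hD : wgt + k - 1 ≠ 0 := by linarith
  rw [tauWalk_matchTau hk hw, tauWalk_matchTau hk hw]
  simp only [of_matchTau, pow_succ, pow_zero, Matrix.one_mul, pairMat_mul partner_involutive,
    trace_pairMat partner_ne, card_fin_prod_bool, matchTime]
  field_simp
  ring

end Matching

lemma sqrt_add_two_lt_iff {N x : ℝ} (hN : 4 ≤ N) (hx : 0 < x) :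
    √N + 2 < x ↔ 0 < (x - 2) ^ 2 - N := by
  have h2 : 2 ≤ √N := Real.le_sqrt_of_sq_le (by linarith)
  conv_rhs => rw [sub_pos, ← Real.sqrt_lt_sqrt_iff (by linarith), Real.sqrt_sq_eq_abs, lt_abs]
  constructor
  · intro h; left; linarith
  · rintro (h | h) <;> linarith

lemma tendsto_sq_div_sq_sub (N : ℝ) :
    Tendsto (fun x : ℝ => (x - 2 + N) ^ 2 / ((x - 2) ^ 2 - N)) atTop (nhds 1) := by
  have hg : ContinuousAt (fun t : ℝ => (1 + (N - 2) * t) ^ 2 / ((1 - 2 * t) ^ 2 - N * t ^ 2)) 0 :=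
    ContinuousAt.div (by fun_prop) (by fun_prop) (by norm_num)
  have hlim := hg.tendsto.comp tendsto_inv_atTop_zero
  norm_num at hlim
  refine hlim.congr' ?_
  filter_upwards [eventually_ne_atTop 0] with x hx
  simp only [Function.comp_apply]
  rw [← mul_div_mul_right _ _ (pow_ne_zero 2 hx)]
  congr 1 <;> field_simp
  ring

theorem matching_bc_general (k : ℕ) (hk : 2 ≤ k) (wgt : ℝ) (hw : 0 < wgt)
    (τ : Fin k × Bool → Fin k × Bool → ℝ)
    (hτ : IsCoalescent (matchW k wgt) τ) :
    tauWalk (matchW k wgt) τ 2 /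
        (tauWalk (matchW k wgt) τ 3 - tauWalk (matchW k wgt) τ 1) =
      (wgt - 2 + (2 * k : ℝ)) ^ 2 / ((wgt - 2) ^ 2 - (2 * k : ℝ)) ∧
    (0 < (wgt - 2 + (2 * k : ℝ)) ^ 2 / ((wgt - 2) ^ 2 - (2 * k : ℝ)) ↔
      Real.sqrt (2 * k : ℝ) + 2 < wgt) ∧
    Tendsto
      (fun w' : ℝ => (w' - 2 + (2 * k : ℝ)) ^ 2 / ((w' - 2) ^ 2 - (2 * k : ℝ)))
      atTop (nhds 1) := by
  have hk' : (4 : ℝ) ≤ 2 * k := by exact_mod_cast (by omega : 4 ≤ 2 * k)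
  have hk0 : 0 < k := by omega
  obtain rfl : τ = matchTau k wgt :=
    hτ.unique (matchW_nonneg hw.le) (fun _ _ => matchW_pos hw)
      (fun i => by rw [deg_matchW]; linarith)
      (isCoalescent_matchTau hk0 hw)
  have hc : (2 * k - 2) / (wgt + 2 * k - 2) ^ 2 ≠ 0 :=
    div_ne_zero (by linarith) (pow_ne_zero 2 (by linarith))
  refine ⟨?_, ?_, tendsto_sq_div_sq_sub _⟩
  · rw [tauWalk_two_matchTau hk0 hw, tauWalk_three_sub_one_matchTau hk0 hw,
      mul_div_mul_left _ _ hc]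
  · rw [div_pos_iff_of_pos_left (by nlinarith), sqrt_add_two_lt_iff hk' hw]

/-- for the complete graph on `N = 2k ≥ 4` vertices with a
perfect matching of weight `w > 0`, provided `(w − 2)² ≠ N`,
`(b/c)* = (w − 2 + N)²/((w − 2)² − N)`; this is positive iff `w > √N + 2`, and
it tends to `1` as `w → ∞`. -/
theorem matching_bc (k : ℕ) (hk : 2 ≤ k) (wgt : ℝ) (hw : 0 < wgt)
    (hne : (wgt - 2) ^ 2 ≠ (2 * k : ℝ))
    (τ : Fin k × Bool → Fin k × Bool → ℝ)
    (hτ : IsCoalescent (matchW k wgt) τ) :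
    tauWalk (matchW k wgt) τ 2 /
        (tauWalk (matchW k wgt) τ 3 - tauWalk (matchW k wgt) τ 1) =
      (wgt - 2 + (2 * k : ℝ)) ^ 2 / ((wgt - 2) ^ 2 - (2 * k : ℝ)) ∧
    (0 < (wgt - 2 + (2 * k : ℝ)) ^ 2 / ((wgt - 2) ^ 2 - (2 * k : ℝ)) ↔
      Real.sqrt (2 * k : ℝ) + 2 < wgt) ∧
    Tendsto
      (fun w' : ℝ => (w' - 2 + (2 * k : ℝ)) ^ 2 / ((w' - 2) ^ 2 - (2 * k : ℝ)))
      atTop (nhds 1) :=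
  matching_bc_general k hk wgt hw τ hτ

end EvoGraph
end
end
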